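/- arXiv:0811.4454 — 3 statements merged into one kernel-verified Lean document; each statement's English description precedes it below -/
import Mathlib

section
/- For the quiver $A_{n-1}: 1\to 2\to\dots\to n-1$, the representation $[i;l]$ (one-dimensional spaces at vertices $i,i+1,\dots,i+l-1$ with identity maps between consecutive ones and zero elsewhere) is indecomposable, and every indecomposable representation of $A_{n-1}$ over a field is isomorphic to some $[i;l]$ with $1\le i\le n-1$, $1\le l\le n-i$. -/
universe u v w

/-- A representation of the linear quiver `A_{N}` : `1 → 2 → ⋯ → N`
(vertices `Fin N`) over a field `k`. -/
structure QuivRep (k : Type u) [Field k] (N : ℕ) where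
  V : Fin N → Type v
  [grp : ∀ i, AddCommGroup (V i)]
  [mod : ∀ i, Module k (V i)]
  f : ∀ (i : Fin N) (h : (i : ℕ) + 1 < N), V i →ₗ[k] V ⟨(i : ℕ) + 1, h⟩

attribute [instance] QuivRep.grp QuivRep.mod

/-- An isomorphism of quiver representations. -/
structure QuivIso (k : Type u) [Field k] (N : ℕ)
    (X : QuivRep.{u, v} k N) (Y : QuivRep.{u, w} k N) where
  φ : ∀ i, X.V i ≃ₗ[k] Y.V i
  comm : ∀ (i : Fin N) (h : (i : ℕ) + 1 < N) (x : X.V i),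
    Y.f i h (φ i x) = φ ⟨(i : ℕ) + 1, h⟩ (X.f i h x)

/-- A family of submodules forming a subrepresentation. -/
def IsSubrep (k : Type u) [Field k] (N : ℕ) (X : QuivRep.{u, v} k N)
    (p : ∀ i, Submodule k (X.V i)) : Prop :=
  ∀ (i : Fin N) (h : (i : ℕ) + 1 < N), ∀ x ∈ p i, X.f i h x ∈ p ⟨(i : ℕ) + 1, h⟩

/-- A quiver representation is indecomposable if it is nonzero and in any
internal direct sum decomposition into two subrepresentations, one summand is
zero. -/
def QuivIndecomposable (k : Type u) [Field k] (N : ℕ) (X : QuivRep.{u, v} k N) : Prop :=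
  (∃ i, ∃ x : X.V i, x ≠ 0) ∧
  ∀ p q : ∀ i, Submodule k (X.V i), IsSubrep k N X p → IsSubrep k N X q →
    (∀ i, IsCompl (p i) (q i)) → (∀ i, p i = ⊥) ∨ (∀ i, q i = ⊥)

/-- The interval representation `[a;b]` (0-based): a copy of `k` at each vertex
`a ≤ j ≤ b`, identity maps between consecutive ones, and `0` elsewhere. -/
noncomputable def IntervalRep (k : Type u) [Field k] (N : ℕ) (a b : ℕ) :
    QuivRep.{u, u} k N where
  V i := ↥(if a ≤ (i : ℕ) ∧ (i : ℕ) ≤ b then (⊤ : Submodule k k) else ⊥)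
  f i h := LinearMap.codRestrict _
    ((if a ≤ (i : ℕ) + 1 ∧ (i : ℕ) + 1 ≤ b then (LinearMap.id : k →ₗ[k] k) else 0).comp
      (Submodule.subtype _))
    (by
      intro x
      by_cases hc : a ≤ (i : ℕ) + 1 ∧ (i : ℕ) + 1 ≤ b <;> simp [hc] <;> split_ifs <;> simp_all)

/-!
An interval representation is indecomposable: inside its support every arrow is an isomorphism of
lines, so a subrepresentation that contains the first line contains everything.

Conversely, let `a` be the first vertex with `X a ≠ 0`, push a nonzero `x ∈ X a` forward along the
arrows to vectors `x i`, and let `b` be the last vertex where `x b ≠ 0`. Pulling back a functional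
`φ` on `X b` with `φ (x b) = 1` along the arrows gives functionals `φ i` with `φ i (x i) = 1` on
`[a, b]`. The lines `k ∙ x i` and the kernels `ker (φ i)` are complementary subrepresentations (the
kernels are stable at the arrow into `a` because `X` vanishes below `a`). Indecomposability kills
the kernels, so the `φ i` are isomorphisms onto `k` and assemble into an isomorphism with `[a; b]`.
-/

namespace IntervalRep

variable {k : Type u} [Field k] {N a b : ℕ}

lemma val_f (i : Fin N) (h : (i : ℕ) + 1 < N) (x : (IntervalRep k N a b).V i) :
    ((IntervalRep k N a b).f i h x).1 = if a ≤ (i : ℕ) + 1 ∧ (i : ℕ) + 1 ≤ b then x.1 else 0 := by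
  simp only [IntervalRep]
  split_ifs <;> rfl

lemma subsingleton {i : Fin N} (hi : ¬(a ≤ (i : ℕ) ∧ (i : ℕ) ≤ b)) :
    Subsingleton ((IntervalRep k N a b).V i) := by
  show Subsingleton ↥(if a ≤ (i : ℕ) ∧ (i : ℕ) ≤ b then (⊤ : Submodule k k) else ⊥)
  rw [if_neg hi]
  infer_instance

lemma isSimpleModule {i : Fin N} (hai : a ≤ (i : ℕ)) (hib : (i : ℕ) ≤ b) :
    IsSimpleModule k ((IntervalRep k N a b).V i) := by
  refine isSimpleModule_iff_finrank_eq_one.mpr ?_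
  show Module.finrank k ↥(if a ≤ (i : ℕ) ∧ (i : ℕ) ≤ b then (⊤ : Submodule k k) else ⊥) = 1
  rw [if_pos ⟨hai, hib⟩, finrank_top, Module.finrank_self]

lemma eq_top_of_isSubrep {r : ∀ i, Submodule k ((IntervalRep k N a b).V i)}
    (hr : IsSubrep k N (IntervalRep k N a b) r) (ha : a < N) (htop : r ⟨a, ha⟩ = ⊤)
    (i : Fin N) (hai : a ≤ (i : ℕ)) (hib : (i : ℕ) ≤ b) : r i = ⊤ := by
  obtain ⟨i, hi⟩ := i
  simp only at hai hib
  obtain ⟨d, rfl⟩ := Nat.exists_eq_add_of_le hai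
  induction d with
  | zero => exact htop
  | succ d ih =>
    refine eq_top_iff.mpr fun y _ => ?_
    have hy : (IntervalRep k N a b).f ⟨a + d, by omega⟩ hi ⟨y.1, by simp [show a + d ≤ b by omega]⟩
        = y :=
      Subtype.ext ((val_f _ _ _).trans (if_pos (by dsimp only; omega)))
    rw [← hy]
    exact hr _ _ _ (by rw [ih (by omega) (by omega) (by omega)]; trivial)

lemma eq_bot_of_isCompl_of_eq_top {r s : ∀ i, Submodule k ((IntervalRep k N a b).V i)}
    (hr : IsSubrep k N (IntervalRep k N a b) r) (hrs : ∀ i, IsCompl (r i) (s i)) (ha : a < N)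
    (htop : r ⟨a, ha⟩ = ⊤) (i : Fin N) : s i = ⊥ := by
  by_cases hi : a ≤ (i : ℕ) ∧ (i : ℕ) ≤ b
  · exact eq_bot_of_top_isCompl (eq_top_of_isSubrep hr ha htop i hi.1 hi.2 ▸ hrs i)
  · have := subsingleton (k := k) hi
    exact Subsingleton.elim _ _

end IntervalRep

theorem quivIndecomposable_intervalRep {k : Type u} [Field k] {N a b : ℕ} (hab : a ≤ b)
    (hb : b < N) : QuivIndecomposable k N (IntervalRep k N a b) := by
  have ha : a < N := by omega
  refine ⟨⟨⟨a, ha⟩, ⟨1, by simp [hab]⟩, fun h => one_ne_zero (congrArg Subtype.val h)⟩, ?_⟩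
  intro p q hp hq hpq
  have := IntervalRep.isSimpleModule (k := k) (i := ⟨a, ha⟩) le_rfl hab
  rcases eq_bot_or_eq_top (p ⟨a, ha⟩) with hpa | hpa
  · exact .inl (IntervalRep.eq_bot_of_isCompl_of_eq_top hq (fun i => (hpq i).symm) ha
      (eq_top_of_bot_isCompl (hpa ▸ hpq _)))
  · exact .inr (IntervalRep.eq_bot_of_isCompl_of_eq_top hp hpq ha hpa)

namespace QuivRep

variable {k : Type u} [Field k] {N : ℕ} (X : QuivRep.{u, v} k N)

/-- `x` at `a`, zero below `a`, and the images of `x` along the arrows above `a`. -/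
def pushforward (a : Fin N) (x : X.V a) : (i : Fin N) → X.V i
  | ⟨0, h⟩ => Function.update (0 : (i : Fin N) → X.V i) a x ⟨0, h⟩
  | ⟨j + 1, h⟩ =>
    if (a : ℕ) ≤ j then X.f ⟨j, by omega⟩ h (pushforward a x ⟨j, by omega⟩)
    else Function.update (0 : (i : Fin N) → X.V i) a x ⟨j + 1, h⟩

/-- `φ` composed with the arrows from `i` to `b` for `i ≤ b`, and zero beyond `b`. -/
noncomputable def pullback (b : Fin N) (φ : X.V b →ₗ[k] k) (i : Fin N) : X.V i →ₗ[k] k :=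
  if h : (i : ℕ) < b then pullback b φ ⟨i + 1, by omega⟩ ∘ₗ X.f i (by omega)
  else Function.update (0 : (i : Fin N) → X.V i →ₗ[k] k) b φ i
termination_by (b : ℕ) - i

variable {X}

section pushforward

variable {a : Fin N} {x : X.V a}

lemma pushforward_of_le {i : Fin N} (hi : i ≤ a) :
    X.pushforward a x i = Function.update (0 : (i : Fin N) → X.V i) a x i := by
  obtain ⟨_ | j, h⟩ := i
  · rw [pushforward]
  · rw [Fin.le_def, Fin.val_mk] at hi
    rw [pushforward, if_neg (by omega)]

@[simp] lemma pushforward_self : X.pushforward a x a = x := by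
  rw [pushforward_of_le le_rfl, Function.update_self]

lemma pushforward_of_lt {i : Fin N} (hi : i < a) : X.pushforward a x i = 0 := by
  rw [pushforward_of_le hi.le, Function.update_of_ne hi.ne, Pi.zero_apply]

lemma pushforward_succ {i : Fin N} (h : (i : ℕ) + 1 < N) (hi : a ≤ i) :
    X.pushforward a x ⟨i + 1, h⟩ = X.f i h (X.pushforward a x i) := by
  rw [pushforward, if_pos (Fin.le_def.mp hi)]

end pushforward

section pullback

variable {b : Fin N} {φ : X.V b →ₗ[k] k}

@[simp] lemma pullback_self : X.pullback b φ b = φ := by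
  rw [pullback, dif_neg (lt_irrefl _), Function.update_self]

lemma pullback_of_lt {i : Fin N} (hi : (i : ℕ) < b) :
    X.pullback b φ i = X.pullback b φ ⟨i + 1, by omega⟩ ∘ₗ X.f i (by omega) := by
  rw [pullback, dif_pos hi]

lemma pullback_of_gt {i : Fin N} (hi : b < i) : X.pullback b φ i = 0 := by
  rw [pullback, dif_neg (by rw [Fin.lt_def] at hi; omega), Function.update_of_ne hi.ne',
    Pi.zero_apply]

end pullback

section

variable {a b : Fin N} {x : X.V a} {φ : X.V b →ₗ[k] k}

lemma pullback_apply_pushforward {i : Fin N} (hai : a ≤ i) (hib : i ≤ b) :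
    X.pullback b φ i (X.pushforward a x i) = φ (X.pushforward a x b) := by
  obtain ⟨d, hd⟩ := Nat.exists_eq_add_of_le (Fin.le_def.mp hib)
  induction d generalizing i with
  | zero => rw [Fin.ext hd.symm, pullback_self]
  | succ d ih =>
    have hi : (i : ℕ) < b := by omega
    rw [pullback_of_lt hi, LinearMap.comp_apply, ← pushforward_succ _ hai]
    exact ih (Fin.le_def.mpr (by simp only; omega)) (Fin.le_def.mpr (by simp only; omega))
      (by simp only; omega)

lemma surjective_pullback {i : Fin N} (hai : a ≤ i) (hib : i ≤ b)
    (hφ : φ (X.pushforward a x b) = 1) : Function.Surjective (X.pullback b φ i) := fun c =>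
  ⟨c • X.pushforward a x i, by rw [map_smul, pullback_apply_pushforward hai hib, hφ, smul_eq_mul,
    mul_one]⟩

lemma isSubrep_span_pushforward (a : Fin N) (x : X.V a) :
    IsSubrep k N X (fun i => k ∙ X.pushforward a x i) := by
  intro i h y hy
  obtain ⟨c, rfl⟩ := Submodule.mem_span_singleton.mp hy
  rw [map_smul]
  refine Submodule.smul_mem _ c ?_
  rcases lt_or_ge i a with hia | hai
  · rw [pushforward_of_lt hia, map_zero]
    exact Submodule.zero_mem _
  · rw [← pushforward_succ h hai]
    exact Submodule.mem_span_singleton_self _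

lemma isSubrep_ker_pullback (b : Fin N) (φ : X.V b →ₗ[k] k) :
    IsSubrep k N X (fun i => LinearMap.ker (X.pullback b φ i)) := by
  intro i h y hy
  rw [LinearMap.mem_ker] at hy ⊢
  rcases lt_or_ge (i : ℕ) b with hib | hbi
  · rwa [pullback_of_lt hib] at hy
  · rw [pullback_of_gt (Fin.lt_def.mpr (by simp only; omega)), LinearMap.zero_apply]

lemma isCompl_span_pushforward_ker_pullback (hbelow : ∀ i < a, Subsingleton (X.V i))
    (habove : ∀ i, b < i → X.pushforward a x i = 0) (hφ : φ (X.pushforward a x b) = 1)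
    (i : Fin N) : IsCompl (k ∙ X.pushforward a x i) (LinearMap.ker (X.pullback b φ i)) := by
  rcases lt_or_ge i a with hia | hai
  · have := hbelow i hia
    rw [Subsingleton.elim (k ∙ _) ⊥, Subsingleton.elim (LinearMap.ker _) ⊤]
    exact isCompl_bot_top
  rcases le_or_gt i b with hib | hbi
  · refine (Submodule.isCompl_span_singleton_of_isCoatom_of_notMem
      (LinearMap.isCoatom_ker_of_surjective (surjective_pullback hai hib hφ)) ?_).symm
    rw [LinearMap.mem_ker, pullback_apply_pushforward hai hib, hφ]
    exact one_ne_zero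
  · rw [habove i hbi, pullback_of_gt hbi, Submodule.span_zero_singleton, LinearMap.ker_zero]
    exact isCompl_bot_top

end

section toIntervalRep

variable (X) (a b : ℕ) (ψ : ∀ i, X.V i →ₗ[k] k)

noncomputable def toIntervalRep
    (htriv : ∀ i : Fin N, ¬(a ≤ (i : ℕ) ∧ (i : ℕ) ≤ b) → Subsingleton (X.V i)) (i : Fin N) :
    X.V i →ₗ[k] (IntervalRep k N a b).V i :=
  LinearMap.codRestrict (if a ≤ (i : ℕ) ∧ (i : ℕ) ≤ b then ⊤ else ⊥) (ψ i) fun v => by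
    split_ifs with hi
    · trivial
    · have := htriv i hi
      rw [Subsingleton.elim v 0, map_zero]
      exact Submodule.zero_mem _

variable {X a b ψ}

lemma bijective_toIntervalRep
    (hbij : ∀ i : Fin N, a ≤ (i : ℕ) → (i : ℕ) ≤ b → Function.Bijective (ψ i))
    (htriv : ∀ i : Fin N, ¬(a ≤ (i : ℕ) ∧ (i : ℕ) ≤ b) → Subsingleton (X.V i)) (i : Fin N) :
    Function.Bijective (X.toIntervalRep a b ψ htriv i) := by
  by_cases hi : a ≤ (i : ℕ) ∧ (i : ℕ) ≤ b
  · obtain ⟨hinj, hsurj⟩ := hbij i hi.1 hi.2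
    refine ⟨fun v w h => hinj (congrArg Subtype.val h), fun y => ?_⟩
    obtain ⟨v, hv⟩ := hsurj y.1
    exact ⟨v, Subtype.ext hv⟩
  · have := htriv i hi
    have := IntervalRep.subsingleton (k := k) hi
    exact ⟨Function.injective_of_subsingleton _, fun y => ⟨0, Subsingleton.elim _ _⟩⟩

noncomputable def quivIsoIntervalRep
    (hbij : ∀ i : Fin N, a ≤ (i : ℕ) → (i : ℕ) ≤ b → Function.Bijective (ψ i))
    (htriv : ∀ i : Fin N, ¬(a ≤ (i : ℕ) ∧ (i : ℕ) ≤ b) → Subsingleton (X.V i))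
    (hcomm : ∀ (i : Fin N) (h : (i : ℕ) + 1 < N), a ≤ (i : ℕ) → (i : ℕ) + 1 ≤ b →
      ψ ⟨i + 1, h⟩ ∘ₗ X.f i h = ψ i) :
    QuivIso k N X (IntervalRep k N a b) where
  φ i := LinearEquiv.ofBijective _ (bijective_toIntervalRep hbij htriv i)
  comm i h v := by
    refine Subtype.ext ((IntervalRep.val_f _ _ _).trans ?_)
    change _ = ψ ⟨i + 1, h⟩ (X.f i h v)
    by_cases hnext : a ≤ (i : ℕ) + 1 ∧ (i : ℕ) + 1 ≤ b
    · rw [if_pos hnext]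
      by_cases hcur : a ≤ (i : ℕ)
      · exact (LinearMap.congr_fun (hcomm i h hcur hnext.2) v).symm
      · have := htriv i (fun hi => hcur hi.1)
        rw [Subsingleton.elim v 0, map_zero, map_zero, map_zero]
        rfl
    · have := htriv ⟨i + 1, h⟩ hnext
      rw [if_neg hnext, Subsingleton.elim (X.f i h v) 0, map_zero]

end toIntervalRep

end QuivRep

open QuivRep in
theorem QuivIndecomposable.exists_quivIso_intervalRep {k : Type u} [Field k] {N : ℕ}
    {X : QuivRep.{u, v} k N} (hX : QuivIndecomposable k N X) :
    ∃ a b : ℕ, a ≤ b ∧ b < N ∧ Nonempty (QuivIso k N X (IntervalRep k N a b)) := by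
  obtain ⟨a, ⟨x, hx⟩, hmin⟩ :=
    wellFounded_lt.has_min {i : Fin N | ∃ x : X.V i, x ≠ 0} hX.1
  have hbelow : ∀ i < a, Subsingleton (X.V i) := fun i hi =>
    subsingleton_of_forall_eq 0 fun y => by_contra fun hy => hmin i ⟨y, hy⟩ hi
  obtain ⟨b, hb, hmax⟩ :=
    wellFounded_gt.has_min {i | X.pushforward a x i ≠ 0} ⟨a, by simpa using hx⟩
  have habove : ∀ i, b < i → X.pushforward a x i = 0 := fun i hi =>
    by_contra fun h => hmax i h hi
  obtain ⟨φ, hφ⟩ := Module.Projective.exists_dual_eq_one k hb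
  rcases hX.2 _ _ (isSubrep_span_pushforward a x) (isSubrep_ker_pullback b φ)
    (isCompl_span_pushforward_ker_pullback hbelow habove hφ) with hspan | hker
  · exact absurd (hspan a) (by simpa using hx)
  refine ⟨a, b, not_lt.mp (hmax a (by simpa using hx)), b.2,
    ⟨quivIsoIntervalRep (ψ := X.pullback b φ) (fun i hai hib => ?_) (fun i hi => ?_)
      (fun i h _ hib => (pullback_of_lt hib).symm)⟩⟩
  · exact ⟨LinearMap.ker_eq_bot.mp (hker i), surjective_pullback hai hib hφ⟩
  · rcases lt_or_ge i a with hia | hai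
    · exact hbelow i hia
    have hbi : b < i := Fin.lt_def.mpr (by rw [Fin.le_def] at hai; omega)
    have hker_i := hker i
    rw [pullback_of_gt hbi, LinearMap.ker_zero] at hker_i
    exact (Submodule.subsingleton_iff k).mp (subsingleton_iff_bot_eq_top.mp hker_i.symm)

theorem gabriel_linear_quiver_general (k : Type u) [Field k] (N : ℕ)
    (X : QuivRep.{u, v} k N) :
    (∀ a b : ℕ, a ≤ b → b < N → QuivIndecomposable k N (IntervalRep k N a b)) ∧
    (QuivIndecomposable k N X →
      ∃ a b : ℕ, a ≤ b ∧ b < N ∧ Nonempty (QuivIso k N X (IntervalRep k N a b))) :=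
  ⟨fun _ _ hab hb => quivIndecomposable_intervalRep hab hb,
    QuivIndecomposable.exists_quivIso_intervalRep⟩

/-- Each interval representation `[a;b]` (with `a ≤ b < N`) of the
linear quiver `A_N` is indecomposable, and every (finite-dimensional)
indecomposable representation is isomorphic to some interval representation. -/
theorem gabriel_linear_quiver (k : Type u) [Field k] (N : ℕ)
    (X : QuivRep.{u, v} k N) [∀ i, FiniteDimensional k (X.V i)] :
    (∀ a b : ℕ, a ≤ b → b < N → QuivIndecomposable k N (IntervalRep k N a b)) ∧
    (QuivIndecomposable k N X →
      ∃ a b : ℕ, a ≤ b ∧ b < N ∧ Nonempty (QuivIso k N X (IntervalRep k N a b))) :=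
  gabriel_linear_quiver_general k N X
end

section
/- Let $h_1,\dots,h_n$ be distinct complex numbers such that $e^{h_i}\neq e^{h_j}$ for $i\neq j$, let $D=\mathrm{diag}(e^{h_1},\dots,e^{h_n})$, and let $g$ be the upper triangular all-ones matrix. Then $gD=x^{-1}Dx$, where $x$ is the unipotent upper triangular matrix with entries $x_{ii}=1$ and $x_{ij}=\frac{1}{e^{h_i-h_j}-1}\prod_{k=i+1}^{j-1}\frac{1}{1-e^{h_k-h_i}}$ for $i<j$. -/
open Complex Finset


/-- The unipotent upper triangular matrix with entries
`x_{ij} = (e^{h_i-h_j} - 1)⁻¹ ∏_{i<k<j} (1 - e^{h_k-h_i})⁻¹` for `i < j`. -/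
noncomputable def unipX (n : ℕ) (h : Fin n → ℂ) : Matrix (Fin n) (Fin n) ℂ :=
  Matrix.of fun i j =>
    if i = j then 1
    else if i < j then
      (1 / (Complex.exp (h i - h j) - 1)) *
        ∏ k ∈ Finset.Ioo i j, (1 / (1 - Complex.exp (h k - h i)))
    else 0

lemma unipX_diag (n : ℕ) (h : Fin n → ℂ) (i : Fin n) : unipX n h i i = 1 := by
  simp [unipX]

lemma unipX_zero (n : ℕ) (h : Fin n → ℂ) {i j : Fin n} (hji : j < i) :
    unipX n h i j = 0 := by
  simp only [unipX, Matrix.of_apply]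
  rw [if_neg (by omega), if_neg (by omega)]

lemma unipX_key (n : ℕ) (h : Fin n → ℂ)
    (hdist : ∀ i j : Fin n, i ≠ j → Complex.exp (h i) ≠ Complex.exp (h j)) :
    ∀ (m : ℕ) (i j : Fin n), j.val = i.val + m →
      (∑ k ∈ Finset.Iic j, unipX n h i k) * Complex.exp (h j)
        = Complex.exp (h i) * unipX n h i j := by
  have hne : ∀ i j : Fin n, i ≠ j → Complex.exp (h i - h j) ≠ 1 := by
    intro i j hij
    intro e
    rw [Complex.exp_sub] at e
    field_simp at e
    exact hdist i j hij e
  intro m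
  induction m with
  | zero =>
    intro i j hij
    have : j = i := Fin.ext (by omega)
    subst this
    rw [Finset.sum_eq_single_of_mem j (Finset.mem_Iic.2 le_rfl)
      (fun k hk hkj => unipX_zero n h (lt_of_le_of_ne (Finset.mem_Iic.1 hk) hkj))]
    simp [unipX_diag]
  | succ m ih =>
    intro i j hij
    have hjn : i.val + m < n := by omega
    set j' : Fin n := ⟨i.val + m, hjn⟩ with hj'
    have hj'v : (j' : ℕ) = i.val + m := rfl
    have hij2 : i ≠ j := by intro e; rw [e] at hij; omega
    have hIic : Finset.Iic j = insert j (Finset.Iic j') := by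
      ext k
      simp only [Finset.mem_Iic, Finset.mem_insert, Fin.le_def, Fin.ext_iff]
      omega
    rw [hIic, Finset.sum_insert (by simp only [Finset.mem_Iic, Fin.le_def]; omega)]
    have ihs := ih i j' rfl
    -- key product identity
    have hclaim : ∏ k ∈ Finset.Ioo i j, (1 / (1 - Complex.exp (h k - h i)))
        = Complex.exp (h i - h j') * unipX n h i j' := by
      rcases Nat.eq_zero_or_pos m with hm | hm
      · have hji : j' = i := Fin.ext (by omega)
        have hempty : Finset.Ioo i j = ∅ := by
          ext k; simp only [Finset.mem_Ioo, Fin.lt_def, Finset.notMem_empty, iff_false]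
          omega
        rw [hji, hempty]
        simp [unipX_diag]
      · have hij' : i < j' := by rw [Fin.lt_def]; simp [hj']; omega
        have hIoo : Finset.Ioo i j = insert j' (Finset.Ioo i j') := by
          ext k
          simp only [Finset.mem_Ioo, Finset.mem_insert, Fin.lt_def, Fin.ext_iff]
          omega
        rw [hIoo, Finset.prod_insert (by simp)]
        have hx : unipX n h i j' = (1 / (Complex.exp (h i - h j') - 1)) *
            ∏ k ∈ Finset.Ioo i j', (1 / (1 - Complex.exp (h k - h i))) := by
          simp only [unipX, Matrix.of_apply, if_neg (ne_of_lt hij'), if_pos hij']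
        rw [hx]
        have hB : Complex.exp (h i - h j') ≠ 1 := hne i j' (ne_of_lt hij')
        have hB0 : Complex.exp (h i - h j') ≠ 0 := Complex.exp_ne_zero _
        have hrev : Complex.exp (h j' - h i) = (Complex.exp (h i - h j'))⁻¹ := by
          rw [← Complex.exp_neg, neg_sub]
        rw [hrev]
        field_simp
        try ring
    have hxj : (Complex.exp (h i - h j) - 1) * unipX n h i j
        = Complex.exp (h i - h j') * unipX n h i j' := by
      rw [← hclaim]
      have hiltj : i < j := by rw [Fin.lt_def]; omega
      simp only [unipX, Matrix.of_apply, if_neg (ne_of_lt hiltj), if_pos hiltj]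
      rw [← mul_assoc, mul_one_div, div_self (sub_ne_zero.2 (hne i j hij2)), one_mul]
    -- now the algebra
    have ha : Complex.exp (h i) ≠ 0 := Complex.exp_ne_zero _
    have hb : Complex.exp (h j) ≠ 0 := Complex.exp_ne_zero _
    have hc : Complex.exp (h j') ≠ 0 := Complex.exp_ne_zero _
    rw [Complex.exp_sub, Complex.exp_sub] at hxj
    field_simp at hxj
    apply mul_left_cancel₀ hc
    linear_combination Complex.exp (h j) * ihs - hxj


/-- With `D = diag(e^{h_1},…,e^{h_n})`, `g` the upper triangular
all-ones matrix, and `e^{h_i}` pairwise distinct, the matrix `x = unipX n h`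
is invertible and diagonalizes `gD`: `gD = x⁻¹ D x`. -/
theorem gD_diagonalization (n : ℕ) (h : Fin n → ℂ)
    (hdist : ∀ i j : Fin n, i ≠ j → Complex.exp (h i) ≠ Complex.exp (h j)) :
    let g : Matrix (Fin n) (Fin n) ℂ := Matrix.of fun i j => if i ≤ j then 1 else 0
    let D : Matrix (Fin n) (Fin n) ℂ := Matrix.diagonal fun i => Complex.exp (h i)
    IsUnit (unipX n h) ∧ g * D = (unipX n h)⁻¹ * (D * unipX n h) := by

  intro g D
  have hdet : (unipX n h).det = 1 := by
    have htri : (unipX n h).BlockTriangular id := fun i j hji => unipX_zero n h hji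
    rw [Matrix.det_of_upperTriangular htri]
    simp [unipX_diag]
  have hunit : IsUnit (unipX n h) := by
    rw [Matrix.isUnit_iff_isUnit_det, hdet]; exact isUnit_one
  refine ⟨hunit, ?_⟩
  have hcomm : unipX n h * (g * D) = D * unipX n h := by
    ext i j
    rw [← Matrix.mul_assoc, Matrix.mul_apply, Matrix.diagonal_mul]
    have : ∀ k, (unipX n h * g) i k * D k j
        = if k = j then (unipX n h * g) i j * Complex.exp (h j) else 0 := by
      intro k
      simp only [D, Matrix.diagonal]
      split <;> simp_all
    rw [Finset.sum_congr rfl (fun k _ => this k), Finset.sum_ite_eq' _ j]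
    simp only [Finset.mem_univ, if_pos]
    have hg : (unipX n h * g) i j = ∑ k ∈ Finset.Iic j, unipX n h i k := by
      rw [Matrix.mul_apply]
      rw [← Finset.sum_filter_add_sum_filter_not Finset.univ (· ≤ j)]
      have h1 : ∀ k ∈ Finset.univ.filter (· ≤ j), unipX n h i k * g k j = unipX n h i k := by
        intro k hk; simp only [Finset.mem_filter] at hk
        simp [g, hk.2]
      have h2 : ∀ k ∈ Finset.univ.filter (¬ · ≤ j), unipX n h i k * g k j = 0 := by
        intro k hk; simp only [Finset.mem_filter] at hk
        simp [g, hk.2]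
      rw [Finset.sum_congr rfl h1, Finset.sum_congr rfl h2, Finset.sum_const_zero, add_zero]
      congr 1
      ext k; simp
    rw [hg]
    rcases le_or_gt i j with hij | hij
    · exact unipX_key n h hdist (j.val - i.val) i j (by omega)
    · rw [Finset.sum_eq_zero (fun k hk => unipX_zero n h (lt_of_le_of_lt (Finset.mem_Iic.1 hk) hij)),
        unipX_zero n h hij]
      ring
  rw [← hcomm, ← Matrix.mul_assoc, Matrix.nonsing_inv_mul _ (by rw [hdet]; exact isUnit_one), Matrix.one_mul]
end

section
/- Let $c_{\lambda,P}$ be defined by $c_{\lambda_0,P}=1$ ($\lambda_0=a/x$ generic) and the recursion $c_{\lambda,P}((\lambda,\lambda)-(\lambda_0,\lambda_0))=\frac{2e^P}{x}(\frac{e^P}{x}+1)\sum_{\alpha\in R^+}\sum_{j\ge 1}j\,c_{\lambda+j\alpha,P}$. Then for $\lambda=\lambda_0-(d_1\alpha_1+\dots+d_{n-1}\alpha_{n-1})$, the limit $\lim_{P\to\infty} c_{\lambda,P}\,e^{-2P(d_1+\dots+d_{n-1})}$ exists in $\mathbb{C}$, and the limits $c_\lambda$ satisfy the Toda recursion $c_\lambda((\lambda,\lambda)-(\lambda_0,\lambda_0))=\frac{2}{x^2}\sum_{\alpha\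 \mathrm{simple}}c_{\lambda+\alpha}$. -/
open Finset

/-- Multi-index (in simple-root coordinates) of the positive root
`α_p + ⋯ + α_q` of type `A` (for `p ≤ q`). -/
def CSroot (N : ℕ) (p q : Fin N) : Fin N → ℕ :=
  fun k => if p ≤ k ∧ k ≤ q then 1 else 0

/-- The right-hand side `∑_{α ∈ R⁺} ∑_{j ≥ 1} j · c_{λ + jα}` of the
Calogero–Sutherland coefficient recursion, for a series supported on the cone
`λ₀ + Q⁻` (weights encoded by multi-indices `d`, with coefficients outside the
cone vanishing). -/
noncomputable def CSsum (N : ℕ) (c : (Fin N → ℕ) → ℂ) (d : Fin N → ℕ) : ℂ :=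
  ∑ p : Fin N, ∑ q : Fin N, if p ≤ q then
    (∑ j ∈ Finset.range (∑ i, d i + 1),
      if ∀ k, j * CSroot N p q k ≤ d k then
        (j : ℂ) * c (fun k => d k - j * CSroot N p q k)
      else 0)
  else 0

open Filter

lemma CSroot_self (N : ℕ) (p : Fin N) :
    CSroot N p p = fun k => if k = p then 1 else 0 := by
  funext k
  by_cases hk : k = p
  · simp [CSroot, hk]
  · have h : ¬(p ≤ k ∧ k ≤ p) := fun ⟨h1, h2⟩ => hk (le_antisymm h2 h1)
    simp [CSroot, hk, h]

lemma sum_CSroot_self (N : ℕ) (p : Fin N) : ∑ k, CSroot N p p k = 1 := by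
  rw [CSroot_self]; simp

lemma one_le_sum_CSroot (N : ℕ) (p q : Fin N) (hpq : p ≤ q) :
    1 ≤ ∑ k, CSroot N p q k := by
  have hp : CSroot N p q p = 1 := by simp [CSroot, hpq]
  calc 1 = CSroot N p q p := hp.symm
    _ ≤ ∑ k, CSroot N p q k :=
      Finset.single_le_sum (fun k _ => Nat.zero_le _) (Finset.mem_univ p)

lemma two_le_sum_CSroot (N : ℕ) (p q : Fin N) (hpq : p < q) :
    2 ≤ ∑ k, CSroot N p q k := by
  have h := Finset.sum_le_sum_of_subset (Finset.subset_univ ({p, q} : Finset (Fin N)))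
    (f := CSroot N p q)
  rw [Finset.sum_pair hpq.ne] at h
  have h1 : CSroot N p q p = 1 := by simp [CSroot, hpq.le]
  have h2 : CSroot N p q q = 1 := by simp [CSroot, hpq.le]
  omega

lemma cond_self (N : ℕ) (p : Fin N) (d : Fin N → ℕ) :
    (∀ k, 1 * CSroot N p p k ≤ d k) ↔ 1 ≤ d p := by
  simp only [one_mul, CSroot_self]
  constructor
  · intro h; simpa using h p
  · intro h k
    by_cases hk : k = p
    · subst hk; simpa using h
    · simp [hk]

lemma sum_dj (N : ℕ) (p q : Fin N) (j : ℕ) (d : Fin N → ℕ)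
    (h : ∀ k, j * CSroot N p q k ≤ d k) :
    ∑ k, (d k - j * CSroot N p q k) + j * ∑ k, CSroot N p q k = ∑ k, d k := by
  rw [Finset.mul_sum, ← Finset.sum_add_distrib]
  exact Finset.sum_congr rfl fun k _ => Nat.sub_add_cancel (h k)

lemma sum_sub_single' (N : ℕ) (d : Fin N → ℕ) (i : Fin N) (h : 1 ≤ d i) :
    ∑ k, (d k - if k = i then 1 else 0) = ∑ k, d k - 1 := by
  have h1 : ∑ k : Fin N, (d k - if k = i then 1 else 0)
      + ∑ k : Fin N, (if k = i then 1 else 0) = ∑ k, d k := by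
    rw [← Finset.sum_add_distrib]
    refine Finset.sum_congr rfl fun k _ => ?_
    by_cases hk : k = i
    · subst hk; simp [Nat.sub_add_cancel h]
    · simp [hk]
  have h2 : ∑ k : Fin N, (if k = i then 1 else 0) = 1 := by simp
  omega

lemma tendsto_exp_zpow_neg (m : ℤ) (hm : m < 0) :
    Tendsto (fun P : ℝ => ((Real.exp P : ℂ)) ^ m) atTop (nhds 0) := by
  obtain ⟨k, rfl⟩ : ∃ k : ℕ, m = -((k : ℤ) + 1) := ⟨(-m).toNat - 1, by omega⟩
  have h1 : (fun P : ℝ => ((Real.exp P : ℂ)) ^ (-((k : ℤ) + 1)))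
      = fun P : ℝ => ((Real.exp (-(((k : ℝ) + 1) * P)) : ℝ) : ℂ) := by
    funext P
    rw [← Complex.ofReal_zpow]
    congr 1
    rw [Real.exp_neg, zpow_neg]
    congr 1
    rw [show ((k : ℤ) + 1) = ((k + 1 : ℕ) : ℤ) by push_cast; ring, zpow_natCast,
      show ((k : ℝ) + 1) * P = (k + 1 : ℕ) * P by push_cast; ring, Real.exp_nat_mul]
  rw [h1]
  rw [show (0 : ℂ) = ((0 : ℝ) : ℂ) by norm_num]
  refine (Complex.continuous_ofReal.tendsto 0).comp ?_
  refine Real.tendsto_exp_atBot.comp ?_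
  refine Filter.tendsto_neg_atTop_atBot.comp ?_
  exact Filter.Tendsto.const_mul_atTop (by positivity) tendsto_id

lemma tendsto_pref (x : ℂ) (a : ℤ) (ha : 1 ≤ a) :
    Tendsto (fun P : ℝ => (2 * (Real.exp P : ℂ) / x) * ((Real.exp P : ℂ) / x + 1)
        * ((Real.exp P : ℂ)) ^ (-(2 * a)))
      atTop (nhds (if a = 1 then 2 / x ^ 2 else 0)) := by
  have hrw : ∀ P : ℝ, (2 * (Real.exp P : ℂ) / x) * ((Real.exp P : ℂ) / x + 1)
        * ((Real.exp P : ℂ)) ^ (-(2 * a))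
      = 2 / x ^ 2 * ((Real.exp P : ℂ)) ^ (2 - 2 * a)
        + 2 / x * ((Real.exp P : ℂ)) ^ (1 - 2 * a) := by
    intro P
    have he : (Real.exp P : ℂ) ≠ 0 := Complex.ofReal_ne_zero.mpr (Real.exp_ne_zero P)
    rw [show (2 - 2 * a : ℤ) = 2 + -(2 * a) by ring, zpow_add₀ he,
      show (1 - 2 * a : ℤ) = 1 + -(2 * a) by ring, zpow_add₀ he, zpow_one,
      show ((Real.exp P : ℂ)) ^ (2 : ℤ) = (Real.exp P : ℂ) * (Real.exp P : ℂ) by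
        rw [zpow_two]]
    ring
  simp only [hrw]
  have T2 : Tendsto (fun P : ℝ => ((Real.exp P : ℂ)) ^ (1 - 2 * a)) atTop (nhds 0) :=
    tendsto_exp_zpow_neg _ (by omega)
  by_cases h1 : a = 1
  · subst h1
    norm_num
    have T1 : Tendsto (fun P : ℝ => ((Real.exp P : ℂ)) ^ (2 - 2 * (1:ℤ))) atTop (nhds 1) := by
      norm_num
    have := (T1.const_mul (2 / x ^ 2)).add (T2.const_mul (2 / x))
    norm_num at this ⊢
    convert this using 2
  · rw [if_neg h1]
    have T1 : Tendsto (fun P : ℝ => ((Real.exp P : ℂ)) ^ (2 - 2 * a)) atTop (nhds 0) :=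
      tendsto_exp_zpow_neg _ (by omega)
    have := (T1.const_mul (2 / x ^ 2)).add (T2.const_mul (2 / x))
    simpa using this

noncomputable def todaAux (N : ℕ) (x : ℂ) (sq : (Fin N → ℕ) → ℂ) : ℕ → (Fin N → ℕ) → ℂ
  | 0, _ => 1
  | (n+1), d =>
    if ∑ i, d i ≤ n then todaAux N x sq n d
    else (2 / x ^ 2 *
        ∑ i : Fin N,
          (if 1 ≤ d i then todaAux N x sq n (fun k => d k - if k = i then 1 else 0) else 0))
      / (sq d - sq 0)

noncomputable def todaL (N : ℕ) (x : ℂ) (sq : (Fin N → ℕ) → ℂ) (d : Fin N → ℕ) : ℂ :=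
  todaAux N x sq (∑ i, d i) d

lemma todaAux_stable (N : ℕ) (x : ℂ) (sq : (Fin N → ℕ) → ℂ) :
    ∀ (m : ℕ) (d : Fin N → ℕ), ∑ i, d i ≤ m → todaAux N x sq m d = todaL N x sq d := by
  intro m
  induction m with
  | zero =>
    intro d hd
    unfold todaL
    rw [Nat.le_zero.mp hd]
  | succ n ih =>
    intro d hd
    by_cases h : ∑ i, d i ≤ n
    · rw [todaAux, if_pos h]
      exact ih d h
    · have h' : ∑ i, d i = n + 1 := by omega
      unfold todaL
      rw [h']

lemma todaL_zero (N : ℕ) (x : ℂ) (sq : (Fin N → ℕ) → ℂ) : todaL N x sq 0 = 1 := by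
  have h : ∑ i : Fin N, (0 : Fin N → ℕ) i = 0 := by simp
  unfold todaL
  rw [h]
  rfl

lemma todaL_rec (N : ℕ) (x : ℂ) (sq : (Fin N → ℕ) → ℂ) (d : Fin N → ℕ)
    (hd : ∑ i, d i ≠ 0) :
    todaL N x sq d = (2 / x ^ 2 *
        ∑ i : Fin N,
          (if 1 ≤ d i then todaL N x sq (fun k => d k - if k = i then 1 else 0) else 0))
      / (sq d - sq 0) := by
  obtain ⟨n, hn⟩ : ∃ n, ∑ i, d i = n + 1 := ⟨∑ i, d i - 1, by omega⟩
  have h1 : todaL N x sq d = todaAux N x sq (n + 1) d := by unfold todaL; rw [hn]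
  rw [h1, todaAux, if_neg (by omega)]
  congr 2
  refine Finset.sum_congr rfl fun i _ => ?_
  by_cases hi : 1 ≤ d i
  · rw [if_pos hi, if_pos hi, todaAux_stable]
    rw [sum_sub_single' N d i hi]
    omega
  · rw [if_neg hi, if_neg hi]

/-- Let `c_{λ,P}` solve the Calogero–Sutherland recursion with
`m = e^P/x` and generic `λ₀` (`sq d = (λ,λ)` for `λ = λ₀ - ∑ d_i α_i`, and
`sq d ≠ sq 0` for `d ≠ 0`).  Then for each `d` the renormalized coefficient
`c_{λ,P} e^{-2P(d_1+⋯+d_{N})}` converges as `P → ∞`, and the limits satisfy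
the Toda recursion `c_λ ((λ,λ)-(λ₀,λ₀)) = (2/x²) ∑_{α simple} c_{λ+α}`. -/
theorem toda_limit_of_CS_coefficients (N : ℕ) (x : ℂ) (hx : x ≠ 0)
    (sq : (Fin N → ℕ) → ℂ)
    (hgen : ∀ d : Fin N → ℕ, d ≠ 0 → sq d ≠ sq 0)
    (c : ℝ → (Fin N → ℕ) → ℂ)
    (hc0 : ∀ P : ℝ, c P 0 = 1)
    (hrec : ∀ (P : ℝ) (d : Fin N → ℕ),
      c P d * (sq d - sq 0)
        = (2 * (Real.exp P : ℂ) / x) * ((Real.exp P : ℂ) / x + 1) * CSsum N (c P) d) :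
    ∃ L : (Fin N → ℕ) → ℂ,
      (∀ d : Fin N → ℕ,
        Filter.Tendsto
          (fun P : ℝ => c P d * ((Real.exp P : ℂ)) ^ (-(2 * (∑ i, d i) : ℤ)))
          Filter.atTop (nhds (L d))) ∧
      (∀ d : Fin N → ℕ,
        L d * (sq d - sq 0)
          = (2 / x ^ 2) *
            ∑ i : Fin N,
              if 1 ≤ d i then L (fun k => d k - if k = i then 1 else 0) else 0) := by
  refine ⟨todaL N x sq, ?_, ?_⟩
  · -- convergence
    have key : ∀ n : ℕ, ∀ d : Fin N → ℕ, ∑ i, d i ≤ n →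
        Filter.Tendsto
          (fun P : ℝ => c P d * ((Real.exp P : ℂ)) ^ (-(2 * (∑ i, d i) : ℤ)))
          Filter.atTop (nhds (todaL N x sq d)) := by
      intro n
      induction n with
      | zero =>
        intro d hd
        have hd0 : d = 0 := by
          funext k
          have := (Finset.sum_eq_zero_iff.mp (Nat.le_zero.mp hd)) k (Finset.mem_univ k)
          simpa using this
        subst hd0
        have he : (fun P : ℝ => c P 0 * ((Real.exp P : ℂ)) ^
            (-(2 * (∑ i : Fin N, (0 : Fin N → ℕ) i) : ℤ))) = fun _ => (1 : ℂ) := by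
          funext P
          simp [hc0]
        rw [he, todaL_zero]
        exact tendsto_const_nhds
      | succ n ih =>
        intro d hd
        by_cases hle : ∑ i, d i ≤ n
        · exact ih d hle
        have hdn : ∑ i, d i = n + 1 := by omega
        have hΔ : sq d - sq 0 ≠ 0 := by
          refine sub_ne_zero.mpr (hgen d ?_)
          intro h0
          rw [h0] at hdn
          simp at hdn
        have hLd : todaL N x sq d * (sq d - sq 0)
            = 2 / x ^ 2 * ∑ i : Fin N,
              (if 1 ≤ d i then todaL N x sq (fun k => d k - if k = i then 1 else 0) else 0) := by
          rw [todaL_rec N x sq d (by omega), div_mul_cancel₀ _ hΔ]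
        have hc : ∀ P : ℝ, c P d * ((Real.exp P : ℂ)) ^ (-(2 * (∑ i, d i) : ℤ))
            = ((2 * (Real.exp P : ℂ) / x) * ((Real.exp P : ℂ) / x + 1)
                * ((Real.exp P : ℂ)) ^ (-(2 * (∑ i, d i) : ℤ)) * CSsum N (c P) d)
              / (sq d - sq 0) := by
          intro P
          have hcP : c P d = (2 * (Real.exp P : ℂ) / x) * ((Real.exp P : ℂ) / x + 1)
              * CSsum N (c P) d / (sq d - sq 0) := by
            rw [eq_div_iff hΔ]
            exact hrec P d
          rw [hcP]
          ring
        -- per-term tendsto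
        have hterm : ∀ (p q : Fin N) (j : ℕ),
            Filter.Tendsto (fun P : ℝ =>
              if p ≤ q ∧ (∀ k, j * CSroot N p q k ≤ d k)
              then (2 * (Real.exp P : ℂ) / x) * ((Real.exp P : ℂ) / x + 1)
                  * ((Real.exp P : ℂ)) ^ (-(2 * (∑ i, d i) : ℤ))
                  * ((j : ℂ) * c P (fun k => d k - j * CSroot N p q k))
              else 0)
            Filter.atTop (nhds (
              if p ≤ q ∧ (∀ k, j * CSroot N p q k ≤ d k) ∧ j = 1 ∧ p = q
              then 2 / x ^ 2 * todaL N x sq (fun k => d k - j * CSroot N p q k)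
              else 0)) := by
          intro p q j
          by_cases hc1 : p ≤ q ∧ ∀ k, j * CSroot N p q k ≤ d k
          · obtain ⟨hpq, hcond⟩ := hc1
            rcases Nat.eq_zero_or_pos j with hj0 | hj1
            · rw [if_neg (by rintro ⟨-, -, hj1, -⟩; omega)]
              refine tendsto_const_nhds.congr fun P => ?_
              rw [if_pos ⟨hpq, hcond⟩, hj0]
              push_cast
              ring
            · have hsum := sum_dj N p q j d hcond
              have hh := one_le_sum_CSroot N p q hpq
              have hjh1 : 1 ≤ j * ∑ k, CSroot N p q k :=
                Nat.one_le_iff_ne_zero.mpr (Nat.mul_ne_zero (by omega) (by omega))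
              have hmn : ∑ i, (d i - j * CSroot N p q i) ≤ n := by omega
              have hIH : Filter.Tendsto
                  (fun P : ℝ => c P (fun k => d k - j * CSroot N p q k)
                    * ((Real.exp P : ℂ)) ^ (-(2 * (∑ i, (d i - j * CSroot N p q i)) : ℤ)))
                  Filter.atTop
                  (nhds (todaL N x sq (fun k => d k - j * CSroot N p q k))) :=
                ih (fun k => d k - j * CSroot N p q k) hmn
              have hpref := tendsto_pref x ((j * ∑ k, CSroot N p q k : ℕ) : ℤ)
                (by exact_mod_cast hjh1)
              have hlim := (hIH.const_mul ((j : ℂ))).mul hpref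
              have hval : (if p ≤ q ∧ (∀ k, j * CSroot N p q k ≤ d k) ∧ j = 1 ∧ p = q
                  then 2 / x ^ 2 * todaL N x sq (fun k => d k - j * CSroot N p q k)
                  else 0)
                  = (j : ℂ) * todaL N x sq (fun k => d k - j * CSroot N p q k) *
                    (if ((j * ∑ k, CSroot N p q k : ℕ) : ℤ) = 1 then 2 / x ^ 2 else 0) := by
                by_cases hone : j * ∑ k, CSroot N p q k = 1
                · have hj1' : j = 1 := Nat.eq_one_of_mul_eq_one_right hone
                  have hpqeq : p = q := by
                    by_contra hne'
                    have h2 := two_le_sum_CSroot N p q (lt_of_le_of_ne hpq hne')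
                    have hle2 : ∑ k, CSroot N p q k ≤ j * ∑ k, CSroot N p q k :=
                      Nat.le_mul_of_pos_left _ hj1
                    omega
                  rw [if_pos ⟨hpq, hcond, hj1', hpqeq⟩, if_pos (by exact_mod_cast hone), hj1']
                  push_cast
                  ring
                · rw [if_neg ?_, if_neg (by exact_mod_cast hone), mul_zero]
                  rintro ⟨-, -, hj1', hpqeq⟩
                  apply hone
                  rw [hj1', one_mul, hpqeq, sum_CSroot_self]
              rw [hval]
              refine hlim.congr fun P => ?_
              have hne : (Real.exp P : ℂ) ≠ 0 := Complex.ofReal_ne_zero.mpr (Real.exp_ne_zero P)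
              rw [if_pos ⟨hpq, hcond⟩,
                show (-(2 * (∑ i, d i) : ℤ))
                    = (-(2 * (∑ i, (d i - j * CSroot N p q i)) : ℤ))
                      + (-(2 * ((j * ∑ k, CSroot N p q k : ℕ) : ℤ))) by
                  rw [← hsum]; push_cast; ring,
                zpow_add₀ hne]
              ring
          · rw [if_neg (by tauto)]
            exact tendsto_const_nhds.congr fun P => (if_neg hc1).symm
        -- sum of limits
        have hsumlim := tendsto_finset_sum (Finset.univ : Finset (Fin N))
          (fun p _ => tendsto_finset_sum (Finset.univ : Finset (Fin N))
            (fun q _ => tendsto_finset_sum (Finset.range (∑ i, d i + 1))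
              (fun j _ => hterm p q j)))
        -- function equality
        have hfun : (fun P : ℝ => (2 * (Real.exp P : ℂ) / x) * ((Real.exp P : ℂ) / x + 1)
              * ((Real.exp P : ℂ)) ^ (-(2 * (∑ i, d i) : ℤ)) * CSsum N (c P) d)
            = fun P : ℝ => ∑ p : Fin N, ∑ q : Fin N, ∑ j ∈ Finset.range (∑ i, d i + 1),
              (if p ≤ q ∧ (∀ k, j * CSroot N p q k ≤ d k)
              then (2 * (Real.exp P : ℂ) / x) * ((Real.exp P : ℂ) / x + 1)
                  * ((Real.exp P : ℂ)) ^ (-(2 * (∑ i, d i) : ℤ))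
                  * ((j : ℂ) * c P (fun k => d k - j * CSroot N p q k))
              else 0) := by
          funext P
          unfold CSsum
          rw [Finset.mul_sum]
          refine Finset.sum_congr rfl fun p _ => ?_
          rw [Finset.mul_sum]
          refine Finset.sum_congr rfl fun q _ => ?_
          by_cases hpq : p ≤ q
          · rw [if_pos hpq, Finset.mul_sum]
            refine Finset.sum_congr rfl fun j _ => ?_
            by_cases hcond : ∀ k, j * CSroot N p q k ≤ d k
            · rw [if_pos hcond, if_pos ⟨hpq, hcond⟩]
            · rw [if_neg hcond, if_neg (by tauto), mul_zero]
          · rw [if_neg hpq, mul_zero]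
            refine (Finset.sum_eq_zero fun j _ => ?_).symm
            rw [if_neg (by tauto)]
        -- value of the limit sum
        have hval : (∑ p : Fin N, ∑ q : Fin N, ∑ j ∈ Finset.range (∑ i, d i + 1),
              (if p ≤ q ∧ (∀ k, j * CSroot N p q k ≤ d k) ∧ j = 1 ∧ p = q
              then 2 / x ^ 2 * todaL N x sq (fun k => d k - j * CSroot N p q k)
              else 0))
            = todaL N x sq d * (sq d - sq 0) := by
          have hpt : ∀ (p q : Fin N) (j : ℕ),
              (if p ≤ q ∧ (∀ k, j * CSroot N p q k ≤ d k) ∧ j = 1 ∧ p = q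
              then 2 / x ^ 2 * todaL N x sq (fun k => d k - j * CSroot N p q k)
              else 0)
              = if q = p then (if j = 1 then
                  (if 1 ≤ d p then
                    2 / x ^ 2 * todaL N x sq (fun k => d k - if k = p then 1 else 0)
                  else 0) else 0) else 0 := by
            intro p q j
            by_cases hq : q = p
            · subst hq
              by_cases hj : j = 1
              · subst hj
                by_cases hdp : 1 ≤ d q
                · have harg : (fun k => d k - 1 * CSroot N q q k)
                      = (fun k => d k - if k = q then 1 else 0) := by
                    funext k
                    rw [CSroot_self]
                    simp
                  rw [if_pos ⟨le_refl q, (cond_self N q d).mpr hdp, rfl, rfl⟩, harg,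
                    if_pos rfl, if_pos rfl, if_pos hdp]
                · rw [if_neg (by rintro ⟨-, hcond, -, -⟩; exact hdp ((cond_self N q d).mp hcond)),
                    if_pos rfl, if_pos rfl, if_neg hdp]
              · rw [if_neg (by tauto), if_pos rfl, if_neg hj]
            · rw [if_neg (by rintro ⟨-, -, -, hpq⟩; exact hq hpq.symm), if_neg hq]
          simp only [hpt]
          have hstep : (∑ p : Fin N, ∑ q : Fin N, ∑ j ∈ Finset.range (∑ i, d i + 1),
                (if q = p then (if j = 1 then
                  (if 1 ≤ d p then
                    2 / x ^ 2 * todaL N x sq (fun k => d k - if k = p then 1 else 0)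
                  else 0) else 0) else 0))
              = ∑ p : Fin N,
                  (if 1 ≤ d p then
                    2 / x ^ 2 * todaL N x sq (fun k => d k - if k = p then 1 else 0)
                  else 0) := by
            refine Finset.sum_congr rfl fun p _ => ?_
            have inner : ∀ q : Fin N, (∑ j ∈ Finset.range (∑ i, d i + 1),
                (if q = p then (if j = 1 then
                  (if 1 ≤ d p then
                    2 / x ^ 2 * todaL N x sq (fun k => d k - if k = p then 1 else 0)
                  else 0) else 0) else 0))
                = if q = p then
                  (if 1 ≤ d p then
                    2 / x ^ 2 * todaL N x sq (fun k => d k - if k = p then 1 else 0)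
                  else 0) else 0 := by
              intro q
              by_cases hq : q = p
              · subst hq
                rw [if_pos rfl]
                have hite := Finset.sum_ite_eq' (Finset.range (∑ i, d i + 1)) 1
                  (fun _ : ℕ =>
                    (if 1 ≤ d q then
                      2 / x ^ 2 * todaL N x sq (fun k => d k - if k = q then 1 else 0)
                    else 0))
                rw [show (∑ j ∈ Finset.range (∑ i, d i + 1),
                    (if q = q then (if j = 1 then
                      (if 1 ≤ d q then
                        2 / x ^ 2 * todaL N x sq (fun k => d k - if k = q then 1 else 0)
                      else 0) else 0) else 0))
                  = (∑ j ∈ Finset.range (∑ i, d i + 1),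
                    (if j = 1 then
                      (if 1 ≤ d q then
                        2 / x ^ 2 * todaL N x sq (fun k => d k - if k = q then 1 else 0)
                      else 0) else 0)) from
                    Finset.sum_congr rfl fun j _ => by rw [if_pos rfl],
                  hite, if_pos (by rw [Finset.mem_range]; omega)]
              · rw [if_neg hq]
                exact Finset.sum_eq_zero fun j _ => if_neg hq
            rw [Finset.sum_congr rfl fun q _ => inner q,
              Finset.sum_ite_eq' Finset.univ p
                (fun _ : Fin N =>
                  (if 1 ≤ d p then
                    2 / x ^ 2 * todaL N x sq (fun k => d k - if k = p then 1 else 0)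
                  else 0)),
              if_pos (Finset.mem_univ p)]
          rw [hstep, hLd, Finset.mul_sum]
          refine Finset.sum_congr rfl fun p _ => ?_
          rw [mul_ite, mul_zero]
        -- assemble
        have h2 : Filter.Tendsto
            (fun P : ℝ => (2 * (Real.exp P : ℂ) / x) * ((Real.exp P : ℂ) / x + 1)
              * ((Real.exp P : ℂ)) ^ (-(2 * (∑ i, d i) : ℤ)) * CSsum N (c P) d)
            Filter.atTop (nhds (todaL N x sq d * (sq d - sq 0))) := by
          rw [hfun, ← hval]
          exact hsumlim
        have h3 := h2.div_const (sq d - sq 0)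
        rw [mul_div_cancel_right₀ _ hΔ] at h3
        exact h3.congr fun P => (hc P).symm
    intro d
    exact key (∑ i, d i) d le_rfl
  · -- Toda recursion
    intro d
    by_cases hd : ∑ i, d i = 0
    · have hd0 : d = 0 := by
        funext k
        have := (Finset.sum_eq_zero_iff.mp hd) k (Finset.mem_univ k)
        simpa using this
      subst hd0
      simp
    · rw [todaL_rec N x sq d hd,
        div_mul_cancel₀ _ (sub_ne_zero.mpr (hgen d (by
          intro h0; rw [h0] at hd; simp at hd)))]
end
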